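/- For all natural numbers m and n, the Gram coefficients satisfy the commutation relation √(n+1)·a_{m, n+1} + √n·a_{m, n−1} = √(m+1)·a_{m+1, n} + √m·a_{m−1, n}, where any term carrying the factor √0 (i.e., involving an index −1) is interpreted as 0. (This is the entrywise content of the identity A·B = B·A between the infinite Gram matrix A = (a_{m,n}) and the infinite symmetric advection matrix B with entries b_{n,m} = √T·( √((m+1)/2)·δ_{m+1,n} + √(m/2)·δ_{m−1,n} ).) -/

import Mathlib

open Real MeasureTheory Matrix Filter

/-- Physicists' Hermite polynomials: H_0 = 1, H_1 = 2x, H_{n+1} = 2x H_n - 2n H_{n-1}. -/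
noncomputable def hermiteH : ℕ → ℝ → ℝ
  | 0, _ => 1
  | 1, x => 2 * x
  | (n + 2), x => 2 * x * hermiteH (n + 1) x - 2 * (n + 1) * hermiteH n x

/-- Asymmetric Hermite basis function ψ_m. -/
noncomputable def psi (T : ℝ) (m : ℕ) (v : ℝ) : ℝ :=
  Real.exp (-v ^ 2 / T) * T ^ (-(1 : ℝ) / 2) *
    ((2 : ℝ) ^ m * (Nat.factorial m : ℝ) * Real.sqrt π) ^ (-(1 : ℝ) / 2) *
    hermiteH m (v / Real.sqrt T)

/-- Gram coefficient a_{m,n} = ∫ ψ_m ψ_n. -/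
noncomputable def gramA (T : ℝ) (m n : ℕ) : ℝ := ∫ v : ℝ, psi T m v * psi T n v

/-!
The functions `ψ_n` obey the ladder recurrence `√(n+1) ψ_{n+1} + √n ψ_{n-1} = √2 (v/√T) ψ_n`:
this is the Hermite recurrence `H_{n+1} = 2x H_n - 2n H_{n-1}` rescaled by the normalisers, whose
consecutive ratio is `√(2(n+1))`. Multiplying by `ψ_m` (resp. `ψ_n`) and integrating, both sides
of the relation equal `∫ √2 (v/√T) ψ_m ψ_n`; the integrals exist because `ψ_m ψ_n` is a polynomial
times a Gaussian.
-/

open Polynomial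

lemma sqrt_mul_rpow_neg_half {a : ℝ} (ha : 0 < a) : √a * a ^ (-(1 : ℝ) / 2) = 1 := by
  rw [Real.sqrt_eq_rpow, ← Real.rpow_add ha]
  norm_num

lemma ladder_mul_comm {α : Type*} (f : ℕ → α → ℝ) (g : α → ℝ)
    (hf : ∀ (n : ℕ) a, √((n : ℝ) + 1) * f (n + 1) a + √(n : ℝ) * f (n - 1) a = g a * f n a)
    (m n : ℕ) (a : α) :
    √((n : ℝ) + 1) * (f m a * f (n + 1) a) + √(n : ℝ) * (f m a * f (n - 1) a)
      = √((m : ℝ) + 1) * (f (m + 1) a * f n a) + √(m : ℝ) * (f (m - 1) a * f n a) := by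
  linear_combination f m a * hf n a - f n a * hf m a

lemma integrable_pow_mul_exp_neg_mul_sq {b : ℝ} (hb : 0 < b) (k : ℕ) :
    Integrable fun x : ℝ => x ^ k * Real.exp (-b * x ^ 2) := by
  simpa [Real.rpow_natCast] using
    integrable_rpow_mul_exp_neg_mul_sq hb (s := k) (by linarith [k.cast_nonneg (α := ℝ)])

lemma integrable_eval_mul_exp_neg_mul_sq {b : ℝ} (hb : 0 < b) (p : ℝ[X]) :
    Integrable fun x : ℝ => p.eval x * Real.exp (-b * x ^ 2) := by
  induction p using Polynomial.induction_on' with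
  | add p q hp hq =>
    simp only [eval_add, add_mul]
    exact hp.add hq
  | monomial k a =>
    simpa only [eval_monomial, mul_assoc] using
      (integrable_pow_mul_exp_neg_mul_sq hb k).const_mul a

noncomputable def hermiteNormalizer (m : ℕ) : ℝ :=
  ((2 : ℝ) ^ m * (Nat.factorial m : ℝ) * Real.sqrt π) ^ (-(1 : ℝ) / 2)

lemma hermiteNormalizer_eq_mul_succ (m : ℕ) :
    hermiteNormalizer m = √2 * √((m : ℝ) + 1) * hermiteNormalizer (m + 1) := by
  have hc : 0 < (2 : ℝ) ^ m * (Nat.factorial m : ℝ) * √π := by positivity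
  have hsucc : (2 : ℝ) ^ (m + 1) * ((m + 1).factorial : ℝ) * √π
      = (2 * ((m : ℝ) + 1)) * ((2 : ℝ) ^ m * (Nat.factorial m : ℝ) * √π) := by
    push_cast [Nat.factorial_succ]; ring
  rw [hermiteNormalizer, hermiteNormalizer, hsucc, Real.mul_rpow (by positivity) hc.le,
    ← mul_assoc, ← Real.sqrt_mul zero_le_two, sqrt_mul_rpow_neg_half (by positivity), one_mul]

noncomputable def hermiteFun (m : ℕ) (x : ℝ) : ℝ := hermiteNormalizer m * hermiteH m x

lemma psi_eq_hermiteFun (T : ℝ) (m : ℕ) (v : ℝ) :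
    psi T m v = Real.exp (-v ^ 2 / T) * T ^ (-(1 : ℝ) / 2) * hermiteFun m (v / √T) := by
  rw [psi, hermiteFun, hermiteNormalizer, mul_assoc]

lemma hermiteFun_recurrence (n : ℕ) (x : ℝ) :
    √((n : ℝ) + 1) * hermiteFun (n + 1) x + √(n : ℝ) * hermiteFun (n - 1) x
      = √2 * x * hermiteFun n x := by
  have h2 : √2 * √2 = 2 := Real.mul_self_sqrt zero_le_two
  cases n with
  | zero =>
    simp only [hermiteFun, hermiteNormalizer_eq_mul_succ 0]
    simp only [CharP.cast_eq_zero, zero_add, sqrt_one, hermiteH, one_mul, sqrt_zero, mul_one,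
      zero_tsub, zero_mul, add_zero]
    linear_combination (-(x * hermiteNormalizer 1)) * h2
  | succ k =>
    have hk : √((k : ℝ) + 1) * √((k : ℝ) + 1) = k + 1 := Real.mul_self_sqrt (by positivity)
    have e1 : hermiteNormalizer (k + 1)
        = √2 * √((k : ℝ) + 1 + 1) * hermiteNormalizer (k + 1 + 1) := by
      rw [hermiteNormalizer_eq_mul_succ (k + 1)]; push_cast; rfl
    have e0 : √((k : ℝ) + 1) * hermiteNormalizer k
        = 2 * (k + 1) * √((k : ℝ) + 1 + 1) * hermiteNormalizer (k + 1 + 1) := by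
      rw [hermiteNormalizer_eq_mul_succ k, e1]
      linear_combination
        √((k : ℝ) + 1 + 1) * hermiteNormalizer (k + 1 + 1) * (√2 * √2 * hk + (k + 1) * h2)
    simp only [hermiteFun, hermiteH, Nat.add_sub_cancel]
    push_cast
    linear_combination hermiteH k x * e0 - √2 * x * hermiteH (k + 1) x * e1
      - x * hermiteH (k + 1) x * √((k : ℝ) + 1 + 1) * hermiteNormalizer (k + 1 + 1) * h2

lemma psi_recurrence (T : ℝ) (n : ℕ) (v : ℝ) :
    √((n : ℝ) + 1) * psi T (n + 1) v + √(n : ℝ) * psi T (n - 1) v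
      = √2 * (v / √T) * psi T n v := by
  simp only [psi_eq_hermiteFun]
  linear_combination
    Real.exp (-v ^ 2 / T) * T ^ (-(1 : ℝ) / 2) * hermiteFun_recurrence n (v / √T)

noncomputable def hermitePoly : ℕ → ℝ[X]
  | 0 => 1
  | 1 => 2 * X
  | n + 2 => 2 * X * hermitePoly (n + 1) - C (2 * ((n : ℝ) + 1)) * hermitePoly n

theorem eval_hermitePoly : ∀ (n : ℕ) (x : ℝ), (hermitePoly n).eval x = hermiteH n x
  | 0, _ => by simp [hermitePoly, hermiteH]
  | 1, _ => by simp [hermitePoly, hermiteH]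
  | n + 2, x => by
    simp [hermitePoly, hermiteH, eval_hermitePoly n, eval_hermitePoly (n + 1)]

lemma integrable_psi_mul_psi {T : ℝ} (hT : 0 < T) (m n : ℕ) :
    Integrable fun v : ℝ => psi T m v * psi T n v := by
  have hgauss := (integrable_eval_mul_exp_neg_mul_sq two_pos
    (hermitePoly m * hermitePoly n)).comp_div (Real.sqrt_pos.2 hT).ne'
  refine (hgauss.const_mul
    ((T ^ (-(1 : ℝ) / 2)) ^ 2 * hermiteNormalizer m * hermiteNormalizer n)).congr
    (ae_of_all _ fun v => ?_)
  have hexp : Real.exp (-2 * (v / √T) ^ 2) = Real.exp (-v ^ 2 / T) * Real.exp (-v ^ 2 / T) := by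
    rw [← Real.exp_add, div_pow, Real.sq_sqrt hT.le]; ring_nf
  simp only [Polynomial.eval_mul, eval_hermitePoly, hexp, psi_eq_hermiteFun, hermiteFun]
  ring

theorem gramA_commutation_relation (T : ℝ) (hT : 0 < T) (m n : ℕ) :
    Real.sqrt ((n : ℝ) + 1) * gramA T m (n + 1) +
        Real.sqrt (n : ℝ) * gramA T m (n - 1) =
      Real.sqrt ((m : ℝ) + 1) * gramA T (m + 1) n +
        Real.sqrt (m : ℝ) * gramA T (m - 1) n := by
  have hA := integrable_psi_mul_psi hT
  simp only [gramA, ← integral_const_mul]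
  rw [← integral_add ((hA m (n + 1)).const_mul _) ((hA m (n - 1)).const_mul _),
    ← integral_add ((hA (m + 1) n).const_mul _) ((hA (m - 1) n).const_mul _)]
  congr 1 with v
  exact ladder_mul_comm (psi T) (fun v => √2 * (v / √T)) (psi_recurrence T) m n v
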